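/- The LPT (longest processing time first) scheduling algorithm, which sorts n jobs with sizes s₁ ≥ s₂ ≥ … ≥ s_n and assigns each job in this order to the currently least loaded of P identical machines, produces a schedule whose makespan is at most 4/3 − 1/(3P) times the optimal makespan. -/

import Mathlib

open Finset

/-- The load of machine `m` under assignment `A` of jobs with sizes `s`. -/
def machineLoad {n P : ℕ} (s : Fin n → ℝ) (A : Fin n → Fin P) (m : Fin P) : ℝ :=
  ∑ j, if A j = m then s j else 0

/-- The load of machine `m` from the jobs preceding job `j`. -/
def partialLoad {n P : ℕ} (s : Fin n → ℝ) (A : Fin n → Fin P) (j : Fin n) (m : Fin P) : ℝ :=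
  ∑ i ∈ Finset.univ.filter (fun i => i < j), if A i = m then s i else 0

/-! Graham's argument. Compare with any schedule of makespan `T`. Let `b` be the last job on
some LPT machine and `L` that machine's load just before `b`. Greedy choice makes `L` the least
load at that moment, so `P L + s_b ≤ ∑ s ≤ P T` and the machine's load `L + s_b` is at most
`T + (1 - 1/P) s_b`; this settles the case `s_b ≤ T/3`.
If `s_b > T/3`, every job up to `b` has size `> T/3`. Give each such job one slot, or two if it
exceeds `T - s_b`. No machine of the schedule of makespan `T` holds more than two slots, so there
are at most `2P`; yet if `L + s_b > T`, every LPT machine already holds two slots among the jobs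
before `b`, and `b` adds one more. -/

/-- A job of size `> T - a` cannot share a machine of load `≤ T < 3a` with another job of size
`≥ a`, so it takes both of the machine's two slots. -/
noncomputable def slotCount (T a x : ℝ) : ℕ := if T - a < x then 2 else 1

section Slots

variable {ι : Type*} {s : ι → ℝ} {T a : ℝ}

lemma one_le_slotCount (x : ℝ) : 1 ≤ slotCount T a x := by
  unfold slotCount; split_ifs <;> norm_num

lemma slotCount_le_two (x : ℝ) : slotCount T a x ≤ 2 := by
  unfold slotCount; split_ifs <;> norm_num

lemma sum_slotCount_le_two {F : Finset ι} (ha : 0 ≤ a) (haF : ∀ i ∈ F, a ≤ s i)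
    (hF : ∑ i ∈ F, s i ≤ T) (hT : T < 3 * a) : ∑ i ∈ F, slotCount T a (s i) ≤ 2 := by
  classical
  by_cases hbig : ∃ x ∈ F, T - a < s x
  · obtain ⟨x, hxF, hx⟩ := hbig
    have hFx : F ⊆ {x} := by
      intro y hyF
      rw [mem_singleton]
      by_contra hyx
      have hpair : s x + s y ≤ ∑ i ∈ F, s i := by
        rw [← sum_pair (Ne.symm hyx)]
        exact sum_le_sum_of_subset_of_nonneg (insert_subset hxF (singleton_subset_iff.mpr hyF))
          fun i hi _ => ha.trans (haF i hi)
      linarith [haF y hyF]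
    calc ∑ i ∈ F, slotCount T a (s i) ≤ ∑ i ∈ {x}, slotCount T a (s i) :=
          sum_le_sum_of_subset hFx
      _ ≤ 2 := by rw [sum_singleton]; exact slotCount_le_two _
  · push Not at hbig
    have hone : ∑ i ∈ F, slotCount T a (s i) = #F := by
      rw [card_eq_sum_ones]
      exact sum_congr rfl fun i hi => if_neg (not_lt.mpr (hbig i hi))
    have hcard : (#F : ℝ) * a ≤ T := by
      simpa using (card_nsmul_le_sum F s a haF).trans hF
    have : (#F : ℝ) < 3 := by nlinarith
    have : #F < 3 := by exact_mod_cast this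
    omega

lemma two_le_sum_slotCount {G : Finset ι} (haT : a ≤ T) (haG : ∀ i ∈ G, a ≤ s i)
    (hG : T - a < ∑ i ∈ G, s i) : 2 ≤ ∑ i ∈ G, slotCount T a (s i) := by
  by_contra! hlt
  have hcard : #G ≤ 1 := by
    have := card_nsmul_le_sum G (fun i => slotCount T a (s i)) 1 fun i _ => one_le_slotCount _
    simp only [smul_eq_mul, mul_one] at this
    omega
  obtain rfl | ⟨x, hx⟩ := G.eq_empty_or_nonempty
  · simp only [sum_empty] at hG
    linarith
  · obtain rfl : G = {x} :=
      eq_singleton_iff_unique_mem.mpr ⟨hx, fun y hy => card_le_one.mp hcard y hy x hx⟩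
    simp only [sum_singleton, slotCount] at hG hlt
    rw [if_pos hG] at hlt
    omega

end Slots

lemma one_le_four_thirds_sub_one_div {P : ℕ} (hP : 0 < P) : (1 : ℝ) ≤ 4 / 3 - 1 / (3 * P) := by
  have hP : (1 : ℝ) ≤ P := by exact_mod_cast hP
  have : 1 / (3 * (P : ℝ)) ≤ 1 / 3 := by
    rw [div_le_div_iff₀ (by positivity) (by norm_num)]
    linarith
  linarith

section Loads

variable {n P : ℕ} {s : Fin n → ℝ}

lemma machineLoad_eq_sum_filter (B : Fin n → Fin P) (m : Fin P) :
    machineLoad s B m = ∑ j with B j = m, s j :=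
  (sum_filter _ _).symm

lemma partialLoad_eq_sum_filter (A : Fin n → Fin P) (b : Fin n) (m : Fin P) :
    partialLoad s A b m = ∑ i ∈ univ.filter (· < b) with A i = m, s i :=
  (sum_filter _ _).symm

lemma sum_machineLoad (B : Fin n → Fin P) : ∑ m, machineLoad s B m = ∑ j, s j := by
  simp only [machineLoad_eq_sum_filter]
  exact sum_fiberwise univ B s

lemma sum_partialLoad (A : Fin n → Fin P) (b : Fin n) :
    ∑ m, partialLoad s A b m = ∑ i with i < b, s i := by
  simp only [partialLoad_eq_sum_filter]
  exact sum_fiberwise _ A s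

lemma machineLoad_nonneg (hs : ∀ i, 0 ≤ s i) (B : Fin n → Fin P) (m : Fin P) :
    0 ≤ machineLoad s B m :=
  (machineLoad_eq_sum_filter B m).symm ▸ sum_nonneg fun j _ => hs j

lemma sum_le_machineLoad (hs : ∀ i, 0 ≤ s i) (B : Fin n → Fin P) (m : Fin P) (F : Finset (Fin n))
    (hF : ∀ j ∈ F, B j = m) : ∑ j ∈ F, s j ≤ machineLoad s B m := by
  rw [machineLoad_eq_sum_filter]
  exact sum_le_sum_of_subset_of_nonneg (fun j hj => mem_filter.mpr ⟨mem_univ j, hF j hj⟩)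
    fun j _ _ => hs j

lemma sum_le_card_mul_of_machineLoad_le {B : Fin n → Fin P} {T : ℝ}
    (hB : ∀ m, machineLoad s B m ≤ T) : ∑ j, s j ≤ P * T := by
  rw [← sum_machineLoad B]
  simpa using sum_le_sum fun m (_ : m ∈ univ) => hB m

lemma machineLoad_eq_partialLoad_add {A : Fin n → Fin P} {b : Fin n}
    (hlast : ∀ j, A j = A b → j ≤ b) : machineLoad s A (A b) = partialLoad s A b (A b) + s b := by
  rw [machineLoad, ← sum_filter_add_sum_filter_not univ (· < b)]
  congr 1
  rw [sum_eq_single_of_mem b (by simp) fun j hj hjb => ?_, if_pos rfl]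
  have hbj : b ≤ j := not_lt.mp (mem_filter.mp hj).2
  exact if_neg fun hAj => hjb (le_antisymm (hlast j hAj) hbj)

end Loads

section LPT

variable {n P : ℕ} {s : Fin n → ℝ} {A B : Fin n → Fin P} {T : ℝ}

lemma card_mul_partialLoad_le_sum_sub (hs : ∀ i, 0 ≤ s i) (b : Fin n)
    (hgreedy : ∀ m, partialLoad s A b (A b) ≤ partialLoad s A b m) :
    P * partialLoad s A b (A b) ≤ ∑ j, s j - s b := by
  have hbefore : P * partialLoad s A b (A b) ≤ ∑ i with i < b, s i := by
    rw [← sum_partialLoad A b]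
    simpa using sum_le_sum fun m (_ : m ∈ univ) => hgreedy m
  have hsplit := sum_filter_add_sum_filter_not univ (· < b) s
  have hb : s b ≤ ∑ i with ¬ i < b, s i := single_le_sum (fun i _ => hs i) (by simp)
  linarith

lemma partialLoad_add_le_of_le_div_three (hs : ∀ i, 0 ≤ s i)
    (hgreedy : ∀ j m, partialLoad s A j (A j) ≤ partialLoad s A j m)
    (hB : ∀ m, machineLoad s B m ≤ T) (b : Fin n) (hsb : s b ≤ T / 3) :
    partialLoad s A b (A b) + s b ≤ (4 / 3 - 1 / (3 * P)) * T := by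
  have hP : (1 : ℝ) ≤ P := by exact_mod_cast (A b).pos
  have hL := card_mul_partialLoad_le_sum_sub hs b (hgreedy b)
  have htotal := sum_le_card_mul_of_machineLoad_le hB
  have hgap : ((P : ℝ) - 1) * s b ≤ (P - 1) * (T / 3) := by gcongr
  rw [← mul_le_mul_iff_of_pos_left (by linarith : (0 : ℝ) < P)]
  calc (P : ℝ) * (partialLoad s A b (A b) + s b) ≤ P * T + (P - 1) * (T / 3) := by linarith
    _ = P * ((4 / 3 - 1 / (3 * P)) * T) := by field_simp; ring

lemma sum_slotCount_le_of_machineLoad_le (hs : ∀ i, 0 ≤ s i) (hB : ∀ m, machineLoad s B m ≤ T)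
    {a : ℝ} (ha : 0 ≤ a) (hT : T < 3 * a) :
    ∑ i with a ≤ s i, slotCount T a (s i) ≤ 2 * P := by
  rw [← sum_fiberwise _ B]
  calc _ ≤ ∑ _m : Fin P, 2 := sum_le_sum fun m _ => by
        refine sum_slotCount_le_two ha (fun i hi => (mem_filter.mp (mem_filter.mp hi).1).2) ?_ hT
        exact (sum_le_machineLoad hs B m _ fun j hj => (mem_filter.mp hj).2).trans (hB m)
    _ = 2 * P := by simp [mul_comm]

lemma two_mul_le_sum_slotCount_of_lt_partialLoad (hsorted : ∀ i j : Fin n, i ≤ j → s j ≤ s i)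
    (b : Fin n) (hsbT : s b ≤ T) (hpartial : ∀ m, T - s b < partialLoad s A b m) :
    2 * P ≤ ∑ i with i < b, slotCount T (s b) (s i) := by
  rw [← sum_fiberwise _ A]
  calc 2 * P = ∑ _m : Fin P, 2 := by simp [mul_comm]
    _ ≤ _ := sum_le_sum fun m _ => by
      refine two_le_sum_slotCount hsbT (fun i hi => hsorted i b ?_) ?_
      · exact (mem_filter.mp (mem_filter.mp hi).1).2.le
      · exact (partialLoad_eq_sum_filter A b m).symm ▸ hpartial m

lemma partialLoad_add_le_of_div_three_lt (hs : ∀ i, 0 ≤ s i)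
    (hsorted : ∀ i j : Fin n, i ≤ j → s j ≤ s i)
    (hgreedy : ∀ j m, partialLoad s A j (A j) ≤ partialLoad s A j m)
    (hB : ∀ m, machineLoad s B m ≤ T) (b : Fin n) (hsb : T / 3 < s b) :
    partialLoad s A b (A b) + s b ≤ T := by
  by_contra! hover
  have hsbT : s b ≤ T :=
    (by simpa using sum_le_machineLoad hs B (B b) {b} (by simp) : s b ≤ _).trans (hB _)
  have hbefore := two_mul_le_sum_slotCount_of_lt_partialLoad hsorted b hsbT fun m => by
    linarith [hgreedy b m]
  have hschedule := sum_slotCount_le_of_machineLoad_le hs hB (hs b) (by linarith)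
  have hsub : insert b (univ.filter (· < b)) ⊆ univ.filter (s b ≤ s ·) := by
    intro i hi
    simp only [mem_insert, mem_filter, mem_univ, true_and] at hi ⊢
    exact hsorted i b (hi.elim le_of_eq le_of_lt)
  have hcount := sum_le_sum_of_subset (f := fun i => slotCount T (s b) (s i)) hsub
  rw [sum_insert (by simp)] at hcount
  have := one_le_slotCount (T := T) (a := s b) (s b)
  omega

lemma lpt_machineLoad_le (hs : ∀ i, 0 ≤ s i) (hsorted : ∀ i j : Fin n, i ≤ j → s j ≤ s i)
    (hgreedy : ∀ j m, partialLoad s A j (A j) ≤ partialLoad s A j m)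
    (hB : ∀ m, machineLoad s B m ≤ T) (m : Fin P) :
    machineLoad s A m ≤ (4 / 3 - 1 / (3 * P)) * T := by
  have hratio := one_le_four_thirds_sub_one_div m.pos
  have hT : 0 ≤ T := (machineLoad_nonneg hs B m).trans (hB m)
  by_cases hused : ∃ j, A j = m
  · obtain ⟨b, hbm, hlast⟩ := (univ.filter (A · = m)).exists_max_image id
      (let ⟨j, hj⟩ := hused; ⟨j, by simpa using hj⟩)
    obtain rfl : A b = m := (mem_filter.mp hbm).2
    rw [machineLoad_eq_partialLoad_add (b := b) fun j hj => hlast j (by simpa using hj)]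
    rcases le_or_gt (s b) (T / 3) with hsmall | hlarge
    · exact partialLoad_add_le_of_le_div_three hs hgreedy hB b hsmall
    · exact (partialLoad_add_le_of_div_three_lt hs hsorted hgreedy hB b hlarge).trans
        (le_mul_of_one_le_left hT hratio)
  · push Not at hused
    rw [machineLoad_eq_sum_filter, filter_false_of_mem fun j _ => hused j, sum_empty]
    positivity

end LPT

/-- LPT scheduling: if the job sizes are sorted in nonincreasing order and each
job is assigned to the currently least loaded of the `P` machines, then the
makespan is at most `4/3 − 1/(3P)` times the optimal makespan. -/
theorem lpt_makespan_bound {n P : ℕ} [NeZero P] (s : Fin n → ℝ)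
    (hs : ∀ i, 0 ≤ s i) (hsorted : ∀ i j : Fin n, i ≤ j → s j ≤ s i)
    (A : Fin n → Fin P)
    (hgreedy : ∀ j : Fin n, ∀ m : Fin P, partialLoad s A j (A j) ≤ partialLoad s A j m) :
    (⨆ m : Fin P, machineLoad s A m) ≤
      (4 / 3 - 1 / (3 * P)) * ⨅ B : Fin n → Fin P, ⨆ m : Fin P, machineLoad s B m := by
  rw [Real.mul_iInf_of_nonneg (zero_le_one.trans (one_le_four_thirds_sub_one_div (NeZero.pos P)))]
  exact le_ciInf fun B => ciSup_le fun m =>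
    lpt_machineLoad_le hs hsorted hgreedy (fun m' => le_ciSup (Finite.bddAbove_range _) m') m
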